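/- If Q is Lipschitz equicontinuous, has the shrinking property, and there exists x* ∈ K such that the sequence {Qⁿ(x*, ·) : n ≥ 1} is tight (for every ε > 0 there is a compact set C ⊆ K with Qⁿ(x*, C) ≥ 1 − ε for all n), then Q is weakly ergodic. -/

import Mathlib

/-!
Iterating the shrinking property shows that `osc_E (Tⁿu) → 0` for every nonempty compact `E`,
uniformly in `u` once `γ(u) + osc(u)` is bounded. With `E = {x, y}` this gives weak contraction,
and shows that `lim Tⁿu(x)`, if it exists, does not depend on `x`. It exists at `x*`: tightness
provides a compact `E` carrying most of the mass of every `Qʲ(x*, ·)`, and then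
`Tᴹ⁺ʲu(x*) = ∫ Tᴹu dQʲ(x*, ·)` is close to `Tᴹu(x*)` for all `j` once `M` is large.
By Prokhorov the tight sequence `Qⁿ(x*, ·)` has a weak cluster point `π`, whose integrals of
bounded Lipschitz functions must be these limits; as such functions determine weak convergence,
`Qⁿ(x, ·) → π` for every `x`.
-/

open MeasureTheory ProbabilityTheory Filter Topology

/-- The oscillation of `u` over a set `E`: `sup {u x - u y : x, y ∈ E}`. -/
noncomputable def oscOn {K : Type*} (u : K → ℝ) (E : Set K) : ℝ :=
  sSup {d : ℝ | ∃ x ∈ E, ∃ y ∈ E, d = u x - u y}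

/-- The oscillation of `u` over the whole space. -/
noncomputable def osc {K : Type*} (u : K → ℝ) : ℝ :=
  oscOn u Set.univ

/-- The (smallest) Lipschitz constant `γ(u)` of `u`. -/
noncomputable def lipConst {K : Type*} [MetricSpace K] (u : K → ℝ) : ℝ :=
  sInf {c : ℝ | 0 ≤ c ∧ ∀ x y, |u x - u y| ≤ c * dist x y}

/-- `u ∈ Lip[K]`: `u` is bounded and Lipschitz continuous. -/
def MemLip {K : Type*} [MetricSpace K] (u : K → ℝ) : Prop :=
  (∃ C : ℝ, ∀ x, |u x| ≤ C) ∧ (∃ c : ℝ, 0 ≤ c ∧ ∀ x y, |u x - u y| ≤ c * dist x y)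

/-- `u ∈ Lip₁[K]`: `u` is bounded and Lipschitz with constant at most `1`. -/
def MemLip1 {K : Type*} [MetricSpace K] (u : K → ℝ) : Prop :=
  (∃ C : ℝ, ∀ x, |u x| ≤ C) ∧ ∀ x y, |u x - u y| ≤ dist x y

/-- Iterates of a Markov kernel: `kiter Q 0 = id`, `kiter Q (n+1) = Q ∘ₖ kiter Q n`, so that
`kiter Q n x = Qⁿ(x, ·)`. -/
noncomputable def kiter {K : Type*} [MeasurableSpace K] (Q : Kernel K K) : ℕ → Kernel K K
  | 0 => Kernel.id
  | n + 1 => Q ∘ₖ kiter Q n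

/-- The `n`-step transition operator `Tⁿu(x) = ∫_K u(y) Qⁿ(x, dy)`. -/
noncomputable def Tn {K : Type*} [MeasurableSpace K] (Q : Kernel K K) (n : ℕ)
    (u : K → ℝ) (x : K) : ℝ :=
  ∫ y, u y ∂(kiter Q n x)

/-- `Q` is Lipschitz equicontinuous: there is `C > 0` with `γ(Tⁿu) ≤ C γ(u)` for
all `n ≥ 1` and all bounded Lipschitz `u`. -/
def LipEquicont {K : Type*} [MetricSpace K] [MeasurableSpace K] (Q : Kernel K K) : Prop :=
  ∃ C : ℝ, 0 < C ∧ ∀ n : ℕ, 1 ≤ n → ∀ u : K → ℝ, MemLip u →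
    lipConst (Tn Q n u) ≤ C * lipConst u

/-- `Q` has the shrinking property. -/
def ShrinkingProperty {K : Type*} [MetricSpace K] [MeasurableSpace K] (Q : Kernel K K) : Prop :=
  ∀ ρ : ℝ, 0 < ρ → ∃ α : ℝ, 0 < α ∧ α < 1 ∧
    ∀ E : Set K, E.Nonempty → IsCompact E → ∀ η : ℝ, 0 < η → ∀ κ : ℝ, 0 < κ →
      ∃ N : ℕ, ∃ F : Set K, F.Nonempty ∧ IsCompact F ∧
        ∀ n : ℕ, N ≤ n → ∀ u : K → ℝ, MemLip u →
          oscOn (Tn Q n u) E ≤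
            η * lipConst u + κ * osc u + α * ρ * lipConst u
              + (1 - α) * oscOn (Tn Q (n - N) u) F

/-- `Q` has the strong shrinking property. -/
def StrongShrinkingProperty {K : Type*} [MetricSpace K] [MeasurableSpace K]
    (Q : Kernel K K) : Prop :=
  ∀ ρ : ℝ, 0 < ρ → ∃ α : ℝ, 0 < α ∧ α < 1 ∧ ∃ N : ℕ,
    ∀ n : ℕ, N ≤ n → ∀ u : K → ℝ, MemLip u →
      osc (Tn Q n u) ≤ α * ρ * lipConst u + (1 - α) * osc (Tn Q (n - N) u)

/-- `Q` is weakly contracting: for all `x, y`,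
`sup {∫ u dQⁿ(x,·) − ∫ u dQⁿ(y,·) : u ∈ Lip₁[K]} → 0`. -/
def WeaklyContracting {K : Type*} [MetricSpace K] [MeasurableSpace K] (Q : Kernel K K) : Prop :=
  ∀ x y : K,
    Filter.Tendsto
      (fun n : ℕ => sSup {d : ℝ | ∃ u : K → ℝ, MemLip1 u ∧ d = Tn Q n u x - Tn Q n u y})
      Filter.atTop (nhds 0)

/-- `Q` is weakly ergodic: weakly contracting, and there is a probability measure `π` with
`∫ u dQⁿ(x,·) → ∫ u dπ` for every bounded continuous `u` and every `x`. -/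
def WeaklyErgodic {K : Type*} [MetricSpace K] [MeasurableSpace K] (Q : Kernel K K) : Prop :=
  WeaklyContracting Q ∧
    ∃ π : Measure K, IsProbabilityMeasure π ∧
      ∀ u : K → ℝ, Continuous u → (∃ C : ℝ, ∀ x, |u x| ≤ C) →
        ∀ x : K, Filter.Tendsto (fun n : ℕ => Tn Q n u x) Filter.atTop (nhds (∫ y, u y ∂π))

open scoped NNReal

section Oscillation

variable {K : Type*} {u : K → ℝ} {C : ℝ}

lemma bddAbove_oscOn_set (hC : ∀ x, |u x| ≤ C) (E : Set K) :
    BddAbove {d : ℝ | ∃ x ∈ E, ∃ y ∈ E, d = u x - u y} := by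
  refine ⟨2 * C, ?_⟩
  rintro d ⟨x, -, y, -, rfl⟩
  linarith [(abs_le.mp (hC x)).2, (abs_le.mp (hC y)).1]

lemma sub_le_oscOn (hC : ∀ x, |u x| ≤ C) {E : Set K} {x y : K} (hx : x ∈ E) (hy : y ∈ E) :
    u x - u y ≤ oscOn u E :=
  le_csSup (bddAbove_oscOn_set hC E) ⟨x, hx, y, hy, rfl⟩

lemma abs_sub_le_oscOn (hC : ∀ x, |u x| ≤ C) {E : Set K} {x y : K} (hx : x ∈ E) (hy : y ∈ E) :
    |u x - u y| ≤ oscOn u E :=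
  abs_sub_le_iff.mpr ⟨sub_le_oscOn hC hx hy, sub_le_oscOn hC hy hx⟩

lemma oscOn_nonneg (hC : ∀ x, |u x| ≤ C) {E : Set K} (hE : E.Nonempty) : 0 ≤ oscOn u E := by
  obtain ⟨x, hx⟩ := hE
  simpa using sub_le_oscOn hC hx hx

lemma oscOn_le {E : Set K} (hE : E.Nonempty) {B : ℝ}
    (hB : ∀ x ∈ E, ∀ y ∈ E, u x - u y ≤ B) : oscOn u E ≤ B := by
  refine csSup_le ?_ ?_
  · obtain ⟨x, hx⟩ := hE
    exact ⟨0, x, hx, x, hx, (sub_self _).symm⟩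
  · rintro d ⟨x, hx, y, hy, rfl⟩
    exact hB x hx y hy

lemma sub_le_osc (hC : ∀ x, |u x| ≤ C) (x y : K) : u x - u y ≤ osc u :=
  sub_le_oscOn hC (Set.mem_univ x) (Set.mem_univ y)

variable [Nonempty K]

lemma osc_nonneg (hC : ∀ x, |u x| ≤ C) : 0 ≤ osc u :=
  oscOn_nonneg hC Set.univ_nonempty

lemma osc_le {B : ℝ} (hB : ∀ x y, u x - u y ≤ B) : osc u ≤ B :=
  oscOn_le Set.univ_nonempty fun x _ y _ => hB x y

end Oscillation

section Lipschitz

variable {K : Type*} [MetricSpace K]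

lemma MemLip.continuous {u : K → ℝ} (h : MemLip u) : Continuous u := by
  obtain ⟨-, c, hc0, hc⟩ := h
  exact (LipschitzWith.of_dist_le_mul (K := ⟨c, hc0⟩) fun x y => hc x y).continuous

lemma MemLip1.memLip {u : K → ℝ} (h : MemLip1 u) : MemLip u :=
  ⟨h.1, 1, zero_le_one, fun x y => by simpa using h.2 x y⟩

lemma memLip_of_lipschitzWith {u : K → ℝ} {L : ℝ≥0} (hu : LipschitzWith L u)
    {C : ℝ} (hC : ∀ x y, dist (u x) (u y) ≤ C) : MemLip u := by
  refine ⟨?_, L, L.2, fun x y => hu.dist_le_mul x y⟩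
  rcases isEmpty_or_nonempty K with hK | ⟨⟨x₀⟩⟩
  · exact ⟨0, fun x => isEmptyElim x⟩
  · refine ⟨|u x₀| + C, fun x => ?_⟩
    have := hC x x₀
    rw [Real.dist_eq] at this
    linarith [abs_sub_abs_le_abs_sub (u x) (u x₀)]

lemma lipConst_nonneg (u : K → ℝ) : 0 ≤ lipConst u :=
  Real.sInf_nonneg fun _ hc => hc.1

lemma lipConst_le {u : K → ℝ} {c : ℝ} (h0 : 0 ≤ c) (hc : ∀ x y, |u x - u y| ≤ c * dist x y) :
    lipConst u ≤ c :=
  csInf_le ⟨0, fun _ hb => hb.1⟩ ⟨h0, hc⟩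

end Lipschitz

section Integrals

lemma integrable_of_abs_le {K : Type*} [MeasurableSpace K] {u : K → ℝ} (hm : Measurable u)
    {C : ℝ} (hC : ∀ x, |u x| ≤ C) (μ : Measure K) [IsFiniteMeasure μ] : Integrable u μ :=
  .of_bound hm.aestronglyMeasurable C (.of_forall hC)

lemma abs_integral_sub_le_oscOn_add {K : Type*} [MeasurableSpace K] {μ : Measure K}
    [IsProbabilityMeasure μ] {w : K → ℝ} (hw : Measurable w) {C : ℝ} (hC : ∀ x, |w x| ≤ C)
    {S : Set K} (hS : MeasurableSet S) {c : K} (hc : c ∈ S) :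
    |∫ x, w x ∂μ - w c| ≤ oscOn w S + 2 * C * μ.real Sᶜ := by
  have hint := integrable_of_abs_le hw hC μ
  have hpoint (x : K) : |w x - w c| ≤ oscOn w S + Sᶜ.indicator (fun _ => 2 * C) x := by
    by_cases hx : x ∈ S
    · simpa [hx] using abs_sub_le_oscOn hC hx hc
    · have := oscOn_nonneg hC ⟨c, hc⟩
      simp only [Set.indicator_of_mem (Set.mem_compl hx)]
      linarith [abs_sub (w x) (w c), hC x, hC c]
  calc |∫ x, w x ∂μ - w c| = |∫ x, (w x - w c) ∂μ| := by
        rw [integral_sub hint (integrable_const _), integral_const, probReal_univ, one_smul]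
    _ ≤ ∫ x, |w x - w c| ∂μ := abs_integral_le_integral_abs
    _ ≤ ∫ x, (oscOn w S + Sᶜ.indicator (fun _ => 2 * C) x) ∂μ :=
        integral_mono (hint.sub (integrable_const _)).abs
          ((integrable_const _).add ((integrable_const _).indicator hS.compl)) hpoint
    _ = oscOn w S + 2 * C * μ.real Sᶜ := by
        rw [integral_add (integrable_const _) ((integrable_const _).indicator hS.compl),
          integral_indicator_const _ hS.compl]
        simp [mul_comm]

variable {K : Type*} [MetricSpace K] [MeasurableSpace K] [BorelSpace K]

lemma MemLip.integrable {u : K → ℝ} (h : MemLip u) (μ : Measure K) [IsFiniteMeasure μ] :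
    Integrable u μ :=
  integrable_of_abs_le h.continuous.measurable h.1.choose_spec μ

lemma integral_sub_integral_le_osc [Nonempty K] {u : K → ℝ} (hu : MemLip u)
    (μ ν : Measure K) [IsProbabilityMeasure μ] [IsProbabilityMeasure ν] :
    ∫ x, u x ∂μ - ∫ y, u y ∂ν ≤ osc u := by
  obtain ⟨C, hC⟩ := hu.1
  have hpoint (y : K) : ∫ x, u x ∂μ ≤ u y + osc u := by
    simpa using integral_mono (hu.integrable μ) (integrable_const (u y + osc u))
      fun x => (by linarith [sub_le_osc hC x y] : u x ≤ u y + osc u)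
  have := integral_mono (integrable_const _)
    ((hu.integrable ν).add (integrable_const (osc u))) hpoint
  simp only [integral_const, probReal_univ, one_smul, Pi.add_apply,
    integral_add (hu.integrable ν) (integrable_const (osc u))] at this
  linarith

end Integrals

lemma isTightMeasureSet_range_of_forall_one_sub_le {K ι : Type*} [TopologicalSpace K] [T2Space K]
    [MeasurableSpace K] [OpensMeasurableSpace K] {μ : ι → Measure K}
    [∀ i, IsProbabilityMeasure (μ i)]
    (h : ∀ ε : ℝ, 0 < ε → ∃ C : Set K, IsCompact C ∧ ∀ i, 1 - ε ≤ (μ i C).toReal) :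
    IsTightMeasureSet (Set.range μ) := by
  rw [isTightMeasureSet_iff_exists_isCompact_measure_compl_le]
  intro ε hε
  rcases eq_top_or_lt_top ε with rfl | hεtop
  · exact ⟨∅, isCompact_empty, fun _ _ => le_top⟩
  obtain ⟨C, hC, hμC⟩ := h ε.toReal (ENNReal.toReal_pos hε.ne' hεtop.ne)
  refine ⟨C, hC, ?_⟩
  rintro _ ⟨i, rfl⟩
  rw [prob_compl_eq_one_sub hC.measurableSet, tsub_le_iff_right,
    ← ENNReal.toReal_le_toReal ENNReal.one_ne_top (by finiteness),
    ENNReal.toReal_add hεtop.ne (by finiteness), ENNReal.toReal_one]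
  linarith [hμC i]

lemma ProbabilityMeasure.exists_tendsto_of_isTightMeasureSet {E : Type*} [MetricSpace E]
    [MeasurableSpace E] [BorelSpace E] {μ : ℕ → ProbabilityMeasure E}
    (htight : IsTightMeasureSet (Set.range fun n => (μ n : Measure E)))
    (hconv : ∀ f : E → ℝ, (∃ C, ∀ x y, dist (f x) (f y) ≤ C) → (∃ L, LipschitzWith L f) →
      ∃ ℓ, Tendsto (fun n => ∫ x, f x ∂(μ n)) atTop (𝓝 ℓ)) :
    ∃ π : ProbabilityMeasure E, Tendsto μ atTop (𝓝 π) := by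
  have hcpt : IsCompact (closure (Set.range μ)) := by
    refine isCompact_closure_of_isTightMeasureSet ?_
    convert htight using 1
    ext; simp
  obtain ⟨π, -, hπ⟩ := hcpt.exists_mapClusterPt_of_frequently (l := atTop)
    (.of_forall fun n => subset_closure (Set.mem_range_self n))
  refine ⟨π, tendsto_iff_forall_lipschitz_integral_tendsto.2 fun f hfb hfl => ?_⟩
  obtain ⟨ℓ, hℓ⟩ := hconv f hfb hfl
  let F : BoundedContinuousFunction E ℝ := ⟨⟨f, hfl.choose_spec.continuous⟩, hfb⟩
  have hcl : MapClusterPt (∫ x, f x ∂π) atTop (fun n => ∫ x, f x ∂(μ n)) :=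
    hπ.continuousAt_comp
      (ProbabilityMeasure.continuous_integral_boundedContinuousFunction F).continuousAt
  rwa [eq_of_nhds_neBot (ClusterPt.mono hcl hℓ)]

section Iterates

variable {K : Type*} [MeasurableSpace K] (Q : Kernel K K)

lemma kiter_add (a b : ℕ) : kiter Q (a + b) = kiter Q a ∘ₖ kiter Q b := by
  induction a with
  | zero => simp [kiter, Kernel.id_comp]
  | succ a ih => rw [Nat.add_right_comm, kiter, ih, kiter, Kernel.comp_assoc]

variable [IsMarkovKernel Q]

instance isMarkovKernel_kiter (n : ℕ) : IsMarkovKernel (kiter Q n) := by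
  induction n with
  | zero => rw [kiter]; infer_instance
  | succ n ih => rw [kiter]; infer_instance

noncomputable def kiterProb (n : ℕ) (x : K) : ProbabilityMeasure K :=
  ⟨kiter Q n x, inferInstance⟩

variable {Q}

lemma Tn_const (c : ℝ) (n : ℕ) (x : K) : Tn Q n (fun _ => c) x = c := by
  simp [Tn]

lemma abs_Tn_le {u : K → ℝ} {C : ℝ} (hC : ∀ x, |u x| ≤ C) (n : ℕ) (x : K) : |Tn Q n u x| ≤ C := by
  simpa [Tn] using norm_integral_le_of_norm_le_const (μ := kiter Q n x) (f := u) (.of_forall hC)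

end Iterates

section LipschitzIterates

variable {K : Type*} [MetricSpace K] [MeasurableSpace K] [BorelSpace K] {Q : Kernel K K}

lemma MemLip.measurable_Tn {u : K → ℝ} (hu : MemLip u) (n : ℕ) : Measurable (Tn Q n u) :=
  (hu.continuous.stronglyMeasurable.integral_kernel (κ := kiter Q n)).measurable

variable [IsMarkovKernel Q]

lemma MemLip.Tn_add {u : K → ℝ} (hu : MemLip u) (a b : ℕ) (x : K) :
    Tn Q (a + b) u x = ∫ z, Tn Q a u z ∂(kiter Q b x) := by
  rw [Tn, kiter_add, Kernel.integral_comp (by rw [← kiter_add]; exact hu.integrable _)]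
  rfl

lemma MemLip.Tn_sub_le_osc [Nonempty K] {u : K → ℝ} (hu : MemLip u) (n : ℕ) (x y : K) :
    Tn Q n u x - Tn Q n u y ≤ osc u :=
  integral_sub_integral_le_osc hu (kiter Q n x) (kiter Q n y)

end LipschitzIterates

namespace ShrinkingProperty

variable {K : Type*} [MetricSpace K] [MeasurableSpace K] [BorelSpace K] [Nonempty K]
  {Q : Kernel K K} [IsMarkovKernel Q]

/-- `k` applications of the shrinking property: each costs `η (γ(u) + osc(u))` and multiplies the
remainder by `1 - α`, while the terms `α ρ γ(u)` add up to at most `ρ γ(u)`. -/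
lemma exists_oscOn_Tn_le_iterate (hshrink : ShrinkingProperty Q) {ρ : ℝ} (hρ : 0 < ρ) :
    ∃ α : ℝ, 0 < α ∧ α < 1 ∧ ∀ (k : ℕ) {η : ℝ}, 0 < η → ∀ E : Set K, E.Nonempty → IsCompact E →
      ∃ M : ℕ, ∀ n, M ≤ n → ∀ u : K → ℝ, MemLip u →
        oscOn (Tn Q n u) E ≤
          k * η * (lipConst u + osc u) + ρ * lipConst u + (1 - α) ^ k * osc u := by
  obtain ⟨α, hα0, hα1, hα⟩ := hshrink ρ hρ
  refine ⟨α, hα0, hα1, fun k => ?_⟩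
  induction k with
  | zero =>
    refine fun _ E hE _ => ⟨0, fun n _ u hu => ?_⟩
    have h := oscOn_le hE fun x _ y _ => hu.Tn_sub_le_osc (Q := Q) n x y
    have := lipConst_nonneg u
    simp only [Nat.cast_zero, zero_mul, pow_zero, one_mul, zero_add]
    nlinarith
  | succ k ih =>
    intro η hη E hE hEc
    obtain ⟨N, F, hF, hFc, hstep⟩ := hα E hE hEc η hη η hη
    obtain ⟨M, hM⟩ := ih hη F hF hFc
    refine ⟨N + M, fun n hn u hu => ?_⟩
    have h1 := hstep n (by omega) u hu
    have h2 := mul_le_mul_of_nonneg_left (hM (n - N) (by omega) u hu) (sub_nonneg.2 hα1.le)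
    have hS : 0 ≤ lipConst u + osc u :=
      add_nonneg (lipConst_nonneg u) (osc_nonneg hu.1.choose_spec)
    have hkηS : 0 ≤ k * η * (lipConst u + osc u) := by positivity
    push_cast
    rw [pow_succ]
    nlinarith [mul_nonneg hα0.le hkηS]

lemma exists_oscOn_Tn_le (hshrink : ShrinkingProperty Q) {E : Set K} (hE : E.Nonempty)
    (hEc : IsCompact E) {ε : ℝ} (hε : 0 < ε) :
    ∃ M : ℕ, ∀ n, M ≤ n → ∀ u : K → ℝ, MemLip u →
      oscOn (Tn Q n u) E ≤ ε * (lipConst u + osc u) := by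
  obtain ⟨α, hα0, hα1, hiter⟩ := hshrink.exists_oscOn_Tn_le_iterate (half_pos hε)
  obtain ⟨k, hk⟩ := exists_pow_lt_of_lt_one (half_pos hε) (by linarith : 1 - α < 1)
  have hη : 0 < ε / (2 * (k + 1)) := by positivity
  obtain ⟨M, hM⟩ := hiter k hη E hE hEc
  refine ⟨M, fun n hn u hu => (hM n hn u hu).trans ?_⟩
  have hkη : k * (ε / (2 * (k + 1))) ≤ ε / 2 := by
    rw [mul_div_assoc', div_le_div_iff₀ (by positivity) two_pos]
    nlinarith
  have hγ := lipConst_nonneg u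
  have hosc := osc_nonneg hu.1.choose_spec
  nlinarith [mul_le_mul_of_nonneg_right hkη (add_nonneg hγ hosc),
    mul_le_mul_of_nonneg_right hk.le hosc]

lemma tendsto_oscOn_Tn (hshrink : ShrinkingProperty Q) {E : Set K} (hE : E.Nonempty)
    (hEc : IsCompact E) {u : K → ℝ} (hu : MemLip u) :
    Tendsto (fun n => oscOn (Tn Q n u) E) atTop (𝓝 0) := by
  obtain ⟨C, hC⟩ := hu.1
  set S := lipConst u + osc u
  have hS : 0 ≤ S := add_nonneg (lipConst_nonneg u) (osc_nonneg hC)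
  refine Metric.tendsto_atTop.2 fun ε hε => ?_
  obtain ⟨M, hM⟩ := hshrink.exists_oscOn_Tn_le hE hEc (div_pos hε (by linarith : 0 < 2 * (S + 1)))
  refine ⟨M, fun n hn => ?_⟩
  have h0 := oscOn_nonneg (fun x => abs_Tn_le (Q := Q) hC n x) hE
  have h1 : ε / (2 * (S + 1)) * S < ε := by
    rw [div_mul_eq_mul_div, div_lt_iff₀ (by positivity)]
    nlinarith
  rw [Real.dist_eq, sub_zero, abs_of_nonneg h0]
  exact (hM n hn u hu).trans_lt h1

lemma tendsto_Tn_sub (hshrink : ShrinkingProperty Q) {u : K → ℝ} (hu : MemLip u) (x y : K) :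
    Tendsto (fun n => Tn Q n u x - Tn Q n u y) atTop (𝓝 0) := by
  obtain ⟨C, hC⟩ := hu.1
  refine squeeze_zero_norm (fun n => ?_) (hshrink.tendsto_oscOn_Tn (E := {x, y})
    (Set.insert_nonempty x {y}) (Set.toFinite _).isCompact hu)
  exact abs_sub_le_oscOn (fun z => abs_Tn_le hC n z) (Set.mem_insert x {y})
    (Set.mem_insert_of_mem x rfl)

lemma weaklyContracting (hshrink : ShrinkingProperty Q)
    (hbdd : Bornology.IsBounded (Set.univ : Set K)) : WeaklyContracting Q := by
  obtain ⟨D, hD⟩ := Metric.isBounded_iff.mp hbdd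
  intro x y
  have hD0 : 0 ≤ D := dist_nonneg.trans (hD (Set.mem_univ x) (Set.mem_univ x))
  refine Metric.tendsto_atTop.2 fun ε hε => ?_
  have hε' : 0 < ε / (2 * (1 + D)) := by positivity
  obtain ⟨M, hM⟩ := hshrink.exists_oscOn_Tn_le (Set.insert_nonempty x {y})
    (Set.toFinite _).isCompact hε'
  refine ⟨M, fun n hn => ?_⟩
  have hbound : ∀ d ∈ {d : ℝ | ∃ u : K → ℝ, MemLip1 u ∧ d = Tn Q n u x - Tn Q n u y},
      d ≤ ε / 2 := by
    rintro d ⟨u, hu, rfl⟩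
    obtain ⟨C, hC⟩ := hu.1
    have hγ : lipConst u ≤ 1 := lipConst_le zero_le_one fun a b => by simpa using hu.2 a b
    have hosc : osc u ≤ D := osc_le fun a b =>
      (le_abs_self _).trans ((hu.2 a b).trans (hD (Set.mem_univ a) (Set.mem_univ b)))
    calc Tn Q n u x - Tn Q n u y ≤ oscOn (Tn Q n u) {x, y} :=
          sub_le_oscOn (fun z => abs_Tn_le hC n z) (Set.mem_insert x {y})
            (Set.mem_insert_of_mem x rfl)
      _ ≤ ε / (2 * (1 + D)) * (lipConst u + osc u) := hM n hn u hu.memLip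
      _ ≤ ε / (2 * (1 + D)) * (1 + D) := by gcongr
      _ = ε / 2 := by field_simp
  have hzero : (0 : ℝ) ∈ {d : ℝ | ∃ u : K → ℝ, MemLip1 u ∧ d = Tn Q n u x - Tn Q n u y} :=
    ⟨fun _ => 0, ⟨⟨0, by simp⟩, fun a b => by simp⟩, by simp [Tn_const]⟩
  have hle := csSup_le ⟨0, hzero⟩ hbound
  have hge := le_csSup ⟨ε / 2, hbound⟩ hzero
  rw [Real.dist_eq, sub_zero, abs_of_nonneg hge]
  linarith

lemma cauchySeq_Tn (hshrink : ShrinkingProperty Q) {x₀ : K}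
    (htight : IsTightMeasureSet (Set.range fun n => kiter Q (n + 1) x₀))
    {u : K → ℝ} (hu : MemLip u) : CauchySeq fun n => Tn Q n u x₀ := by
  obtain ⟨C, hC⟩ := hu.1
  have hC0 : 0 ≤ C := (abs_nonneg _).trans (hC x₀)
  refine Metric.cauchySeq_iff'.2 fun ε hε => ?_
  have hδ : 0 < ε / (8 * (C + 1)) := by positivity
  obtain ⟨S, hSc, hS⟩ := isTightMeasureSet_iff_exists_isCompact_measure_compl_le.1 htight
    (ENNReal.ofReal (ε / (8 * (C + 1)))) (by simpa using hδ)
  have hS' : IsCompact (insert x₀ S) := hSc.insert x₀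
  obtain ⟨M, hM⟩ := ((hshrink.tendsto_oscOn_Tn (Set.insert_nonempty x₀ S) hS' hu).eventually
    (gt_mem_nhds (by positivity : (0 : ℝ) < ε / 8))).exists
  have hclose (j : ℕ) : |Tn Q (M + (j + 1)) u x₀ - Tn Q M u x₀| ≤ ε / 8 + ε / 4 := by
    have hmass : (kiter Q (j + 1) x₀).real (insert x₀ S)ᶜ ≤ ε / (8 * (C + 1)) := by
      refine ENNReal.toReal_le_of_le_ofReal hδ.le ((measure_mono ?_).trans (hS _ ⟨j, rfl⟩))
      exact Set.compl_subset_compl.2 (Set.subset_insert x₀ S)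
    have h2C : 2 * C * (ε / (8 * (C + 1))) ≤ ε / 4 := by
      rw [mul_div_assoc', div_le_div_iff₀ (by positivity) (by norm_num)]
      nlinarith
    rw [hu.Tn_add]
    refine (abs_integral_sub_le_oscOn_add (hu.measurable_Tn M) (fun z => abs_Tn_le hC M z)
      hS'.measurableSet (Set.mem_insert x₀ S)).trans ?_
    nlinarith
  refine ⟨M + 1, fun n hn => ?_⟩
  obtain ⟨j, rfl⟩ : ∃ j, n = M + (j + 1) := ⟨n - M - 1, by omega⟩
  rw [Real.dist_eq]
  linarith [abs_sub_le (Tn Q (M + (j + 1)) u x₀) (Tn Q M u x₀) (Tn Q (M + 1) u x₀),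
    abs_sub_comm (Tn Q M u x₀) (Tn Q (M + 1) u x₀), hclose j, hclose 0]

lemma exists_tendsto_Tn (hshrink : ShrinkingProperty Q) {x₀ : K}
    (htight : IsTightMeasureSet (Set.range fun n => kiter Q (n + 1) x₀))
    {u : K → ℝ} (hu : MemLip u) : ∃ ℓ, ∀ x, Tendsto (fun n => Tn Q n u x) atTop (𝓝 ℓ) := by
  obtain ⟨ℓ, hℓ⟩ := cauchySeq_tendsto_of_complete (hshrink.cauchySeq_Tn htight hu)
  refine ⟨ℓ, fun x => ?_⟩
  simpa using hℓ.add (hshrink.tendsto_Tn_sub hu x x₀)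

lemma exists_tendsto_kiter (hshrink : ShrinkingProperty Q) {x₀ : K}
    (htight : IsTightMeasureSet (Set.range fun n => kiter Q (n + 1) x₀)) :
    ∃ π : ProbabilityMeasure K, ∀ x, Tendsto (fun n => kiterProb Q n x) atTop (𝓝 π) := by
  have hlim (f : K → ℝ) (hfb : ∃ C, ∀ x y, dist (f x) (f y) ≤ C) (hfl : ∃ L, LipschitzWith L f) :
      ∃ ℓ, ∀ x, Tendsto (fun n => Tn Q n f x) atTop (𝓝 ℓ) :=
    hshrink.exists_tendsto_Tn htight
      (memLip_of_lipschitzWith hfl.choose_spec hfb.choose_spec)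
  obtain ⟨π, hπ⟩ := ProbabilityMeasure.exists_tendsto_of_isTightMeasureSet
    (μ := fun n => kiterProb Q (n + 1) x₀) htight fun f hfb hfl => by
      obtain ⟨ℓ, hℓ⟩ := hlim f hfb hfl
      exact ⟨ℓ, (hℓ x₀).comp (tendsto_add_atTop_nat 1)⟩
  refine ⟨π, fun x => tendsto_iff_forall_lipschitz_integral_tendsto.2 fun f hfb hfl => ?_⟩
  obtain ⟨ℓ, hℓ⟩ := hlim f hfb hfl
  have hℓπ : ℓ = ∫ y, f y ∂π :=
    tendsto_nhds_unique ((hℓ x₀).comp (tendsto_add_atTop_nat 1))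
      (tendsto_iff_forall_lipschitz_integral_tendsto.1 hπ f hfb hfl)
  exact hℓπ ▸ hℓ x

end ShrinkingProperty

theorem stmt_3_general {K : Type*} [MetricSpace K] [MeasurableSpace K] [BorelSpace K]
    (hbdd : Bornology.IsBounded (Set.univ : Set K))
    (Q : Kernel K K) [IsMarkovKernel Q]
    (hshrink : ShrinkingProperty Q)
    (x₀ : K)
    (htight : ∀ ε : ℝ, 0 < ε → ∃ C : Set K, IsCompact C ∧
      ∀ n : ℕ, 1 ≤ n → 1 - ε ≤ ((kiter Q n x₀) C).toReal) :
    WeaklyErgodic Q := by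
  have : Nonempty K := ⟨x₀⟩
  have htight' : IsTightMeasureSet (Set.range fun n => kiter Q (n + 1) x₀) :=
    isTightMeasureSet_range_of_forall_one_sub_le fun ε hε => by
      obtain ⟨C, hC, hμC⟩ := htight ε hε
      exact ⟨C, hC, fun n => hμC (n + 1) n.succ_pos⟩
  obtain ⟨π, hπ⟩ := hshrink.exists_tendsto_kiter htight'
  refine ⟨hshrink.weaklyContracting hbdd, π, inferInstance, fun u hu hub x => ?_⟩
  obtain ⟨C, hC⟩ := hub
  exact ProbabilityMeasure.tendsto_iff_forall_integral_tendsto.1 (hπ x)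
    (.ofNormedAddCommGroup u hu C hC)

/-- If `Q` is Lipschitz equicontinuous, has the shrinking property, and there is
`x*` such that `{Qⁿ(x*, ·) : n ≥ 1}` is tight, then `Q` is weakly ergodic. -/
theorem stmt_3 {K : Type*} [MetricSpace K] [CompleteSpace K]
    [TopologicalSpace.SeparableSpace K] [MeasurableSpace K] [BorelSpace K]
    (hbdd : Bornology.IsBounded (Set.univ : Set K))
    (Q : Kernel K K) [IsMarkovKernel Q]
    (hlip : LipEquicont Q) (hshrink : ShrinkingProperty Q)
    (x₀ : K)
    (htight : ∀ ε : ℝ, 0 < ε → ∃ C : Set K, IsCompact C ∧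
      ∀ n : ℕ, 1 ≤ n → 1 - ε ≤ ((kiter Q n x₀) C).toReal) :
    WeaklyErgodic Q :=
  stmt_3_general hbdd Q hshrink x₀ htight
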